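/- The function 𝔑_h satisfies Watts's fifth-order differential equation on (0,1): for every x ∈ (0,1), the third derivative at x of the function y ↦ (y(1−y))^{4/3} · (d/dy)[ (y(1−y))^{2/3} · 𝔑_h′(y) ] equals 0. -/

import Mathlib

open scoped BigOperators

/-- Rising factorial (Pochhammer symbol) `(x)_k = x(x+1)⋯(x+k-1)`. -/
noncomputable def pochR (x : ℝ) (k : ℕ) : ℝ := ∏ i ∈ Finset.range k, (x + i)

/-- The Gauss hypergeometric series `₂F₁(a,b;c;z)`. -/
noncomputable def F21R (a b c z : ℝ) : ℝ :=
  ∑' k : ℕ, pochR a k * pochR b k / (pochR c k * (Nat.factorial k : ℝ)) * z ^ k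

/-- The generalized hypergeometric series `₃F₂(a₁,a₂,a₃;b₁,b₂;z)`. -/
noncomputable def F32R (a₁ a₂ a₃ b₁ b₂ z : ℝ) : ℝ :=
  ∑' k : ℕ, pochR a₁ k * pochR a₂ k * pochR a₃ k /
      (pochR b₁ k * pochR b₂ k * (Nat.factorial k : ℝ)) * z ^ k

/-- Cardy's horizontal crossing function `𝔓_h`. -/
noncomputable def Ph (z : ℝ) : ℝ :=
  3 * Real.Gamma (2/3) / (Real.Gamma (1/3)) ^ 2 * z ^ ((1:ℝ)/3) *
    F21R (1/3) (2/3) (4/3) z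

/-- Watts's horizontal-vertical crossing function `𝔓_hv`. -/
noncomputable def Phv (z : ℝ) : ℝ :=
  Ph z - Real.sqrt 3 / (2 * Real.pi) * z * F32R 1 1 (4/3) 2 (5/3) z

/-- Cardy's cluster-number function `𝔑_h`. -/
noncomputable def Nh (z : ℝ) : ℝ :=
  1/2 - Real.sqrt 3 / (4 * Real.pi) *
    (Real.log (1 - z) + (1 - z) * F32R 1 1 (4/3) 2 (5/3) (1 - z))

/-! With `w = 1 - z` one has `𝔑_h = 1/2 - (√3/(4π)) (log w + φ w)`, where `φ' = S` is the
Gauss series `S = ₂F₁(1, 4/3; 5/3; ·)`. The Pochhammer recursion for the coefficients of `S`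
telescopes into the first-order equation `w (1 - w) S' = (4w/3 - 2/3) S + 2/3`. Hence `𝔑_h'` solves
`y (1 - y) 𝔑_h'' + (2/3) (1 - 2y) 𝔑_h' = (√3/(4π)) y / (3 (1 - y))`, which says exactly that
`(y(1-y))^{4/3} d/dy [(y(1-y))^{2/3} 𝔑_h'] = (√3/(12π)) y²` on `(0,1)`; a quadratic has vanishing
third derivative. -/

open Set Filter Topology

lemma pochR_succ (x : ℝ) (k : ℕ) : pochR x (k + 1) = pochR x k * (x + k) :=
  Finset.prod_range_succ _ _

lemma pochR_pos {x : ℝ} (hx : 0 < x) (k : ℕ) : 0 < pochR x k :=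
  Finset.prod_pos fun _ _ => by positivity

lemma pochR_one (k : ℕ) : pochR 1 k = k.factorial := by
  induction k with
  | zero => simp [pochR]
  | succ n ih => rw [pochR_succ, ih, Nat.factorial_succ]; push_cast; ring

lemma pochR_two (k : ℕ) : pochR 2 k = (k + 1).factorial := by
  induction k with
  | zero => simp [pochR]
  | succ n ih => rw [pochR_succ, ih, Nat.factorial_succ (n + 1)]; push_cast; ring

noncomputable def pochRatio (a b : ℝ) (k : ℕ) : ℝ := pochR a k / pochR b k

section PochRatio

variable {a b : ℝ}

@[simp]
lemma pochRatio_zero : pochRatio a b 0 = 1 := by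
  simp [pochRatio, pochR]

lemma pochRatio_succ (hb : 0 < b) (k : ℕ) :
    (b + k) * pochRatio a b (k + 1) = (a + k) * pochRatio a b k := by
  have := pochR_pos hb k
  rw [pochRatio, pochRatio, pochR_succ, pochR_succ]
  field_simp

lemma abs_pochRatio_le_one (ha : 0 < a) (hab : a ≤ b) (k : ℕ) : |pochRatio a b k| ≤ 1 := by
  have hb := pochR_pos (ha.trans_le hab) k
  rw [pochRatio, abs_of_pos (div_pos (pochR_pos ha k) hb), div_le_one hb]
  exact Finset.prod_le_prod (fun i _ => by positivity) fun i _ => by linarith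

lemma F21R_one_left (w : ℝ) : F21R 1 a b w = ∑' k, pochRatio a b k * w ^ k := by
  refine tsum_congr fun k => ?_
  have : (k.factorial : ℝ) ≠ 0 := by positivity
  rw [pochR_one, pochRatio]
  field_simp

lemma F32R_coeff_eq_pochRatio (k : ℕ) :
    pochR 1 k * pochR 1 k * pochR a k / (pochR 2 k * pochR b k * k.factorial)
      = pochRatio a b k / (k + 1) := by
  have : (k.factorial : ℝ) ≠ 0 := by positivity
  rw [pochR_one, pochR_two, pochRatio, Nat.factorial_succ]
  push_cast
  field_simp

end PochRatio

section PowerSeries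

lemma summable_succ_mul_geometric {r : ℝ} (h0 : 0 ≤ r) (h1 : r < 1) :
    Summable fun k : ℕ => ((k : ℝ) + 1) * r ^ k := by
  have h := summable_pow_mul_geometric_of_norm_lt_one (R := ℝ) 1
    (by rwa [Real.norm_eq_abs, abs_of_nonneg h0])
  simpa [add_mul] using h.add (summable_geometric_of_lt_one h0 h1)

variable {c : ℕ → ℝ} {C : ℝ}

lemma summable_mul_pow_of_abs_le (hc : ∀ k, |c k| ≤ C * (k + 1)) {w : ℝ} (hw : |w| < 1) :
    Summable fun k => c k * w ^ k := by
  refine .of_norm_bounded ((summable_succ_mul_geometric (abs_nonneg w) hw).mul_left C)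
    fun k => ?_
  rw [Real.norm_eq_abs, abs_mul, abs_pow, ← mul_assoc]
  exact mul_le_mul_of_nonneg_right (hc k) (by positivity)

lemma hasDerivAt_tsum_div_succ_mul_pow_succ (hc : ∀ k, |c k| ≤ C * (k + 1)) {w : ℝ}
    (hw : |w| < 1) :
    HasDerivAt (fun y => ∑' k : ℕ, c k / (k + 1) * y ^ (k + 1)) (∑' k, c k * w ^ k) w := by
  obtain ⟨ρ, hwρ, hρ1⟩ := exists_between hw
  have hρ0 : 0 < ρ := (abs_nonneg w).trans_lt hwρ
  refine hasDerivAt_tsum_of_isPreconnected (g := fun k y => c k / (k + 1) * y ^ (k + 1))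
    (g' := fun k y => c k * y ^ k)
    ((summable_succ_mul_geometric hρ0.le hρ1).mul_left C) isOpen_Ioo isPreconnected_Ioo
    (fun k y _ => ?_) (fun k y hy => ?_) (y₀ := 0) (by simp [hρ0]) (by simp) (abs_lt.1 hwρ)
  · refine ((hasDerivAt_pow (k + 1) y).const_mul (c k / (k + 1))).congr_deriv ?_
    push_cast
    field_simp
  · rw [Real.norm_eq_abs, abs_mul, abs_pow, ← mul_assoc]
    exact mul_le_mul (hc k) (pow_le_pow_left₀ (abs_nonneg y) (abs_le.2 ⟨hy.1.le, hy.2.le⟩) k)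
      (by positivity) ((abs_nonneg _).trans (hc k))

end PowerSeries

section HypergeometricOneLeft

variable {a b : ℝ}

lemma abs_pochRatio_le_succ (ha : 0 < a) (hab : a ≤ b) (k : ℕ) :
    |pochRatio a b k| ≤ 1 * (k + 1) := by
  linarith [abs_pochRatio_le_one ha hab k, (k.cast_nonneg : (0 : ℝ) ≤ k)]

lemma abs_succ_mul_pochRatio_succ_le (ha : 0 < a) (hab : a ≤ b) (k : ℕ) :
    |(k + 1) * pochRatio a b (k + 1)| ≤ 1 * (k + 1) := by
  rw [abs_mul, abs_of_pos (by positivity : (0 : ℝ) < k + 1)]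
  nlinarith [abs_pochRatio_le_one ha hab (k + 1)]

lemma hasDerivAt_F21R_one_left (ha : 0 < a) (hab : a ≤ b) {w : ℝ} (hw : |w| < 1) :
    HasDerivAt (F21R 1 a b) (∑' k : ℕ, (k + 1) * pochRatio a b (k + 1) * w ^ k) w := by
  have hshift : ∀ y : ℝ, |y| < 1 → F21R 1 a b y
      = 1 + ∑' k : ℕ, (k + 1) * pochRatio a b (k + 1) / (k + 1) * y ^ (k + 1) := fun y hy => by
    rw [F21R_one_left,
      (summable_mul_pow_of_abs_le (abs_pochRatio_le_succ ha hab) hy).tsum_eq_zero_add]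
    congr 1
    · simp
    · refine tsum_congr fun k => ?_
      field_simp
  refine ((hasDerivAt_tsum_div_succ_mul_pow_succ (abs_succ_mul_pochRatio_succ_le ha hab)
    hw).const_add 1).congr_of_eventuallyEq ?_
  filter_upwards [(isOpen_lt continuous_abs continuous_const).mem_nhds hw] with y hy
  exact hshift y hy

lemma F21R_one_left_ode (ha : 0 < a) (hab : a ≤ b) {w : ℝ} (hw : |w| < 1) :
    w * (1 - w) * deriv (F21R 1 a b) w = (a * w - (b - 1)) * F21R 1 a b w + (b - 1) := by
  have hS := summable_mul_pow_of_abs_le (abs_pochRatio_le_succ ha hab) hw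
  have hD := summable_mul_pow_of_abs_le (abs_succ_mul_pochRatio_succ_le ha hab) hw
  set c : ℕ → ℝ := fun k => ((b - 1) + k * w) * pochRatio a b k * w ^ k with hc
  have htele : ∀ k : ℕ, w * (1 - w) * ((k + 1) * pochRatio a b (k + 1) * w ^ k)
      - (a * w - (b - 1)) * (pochRatio a b k * w ^ k) = c k - c (k + 1) := fun k => by
    simp only [hc]
    push_cast
    linear_combination w ^ (k + 1) * pochRatio_succ (a := a) (ha.trans_le hab) k
  have hc_lim : Tendsto c atTop (𝓝 0) := by
    refine (summable_mul_pow_of_abs_le (C := |b - 1| + 1) (fun k => ?_) hw).tendsto_atTop_zero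
    have hk : (0 : ℝ) ≤ k := k.cast_nonneg
    calc |((b - 1) + k * w) * pochRatio a b k|
        = |(b - 1) + k * w| * |pochRatio a b k| := abs_mul _ _
      _ ≤ (|b - 1| + k) * 1 := by
        refine mul_le_mul ((abs_add_le _ _).trans ?_) (abs_pochRatio_le_one ha hab k)
          (abs_nonneg _) (by positivity)
        rw [abs_mul, Nat.abs_cast]
        nlinarith [abs_nonneg w]
      _ ≤ (|b - 1| + 1) * (k + 1) := by nlinarith [abs_nonneg (b - 1)]
  have hsum : HasSum (fun k : ℕ => w * (1 - w) * ((k + 1) * pochRatio a b (k + 1) * w ^ k)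
      - (a * w - (b - 1)) * (pochRatio a b k * w ^ k)) (b - 1) := by
    rw [((hD.mul_left _).sub (hS.mul_left _)).hasSum_iff_tendsto_nat]
    simp_rw [htele, Finset.sum_range_sub']
    convert hc_lim.const_sub (c 0) using 2
    simp [hc]
  rw [(hasDerivAt_F21R_one_left ha hab hw).deriv, F21R_one_left, ← tsum_mul_left,
    ← tsum_mul_left]
  linarith [hsum.tsum_eq, (hD.mul_left (w * (1 - w))).tsum_sub (hS.mul_left (a * w - (b - 1)))]

end HypergeometricOneLeft

lemma HasDerivAt.rpow_mul_one_sub_mul {f : ℝ → ℝ} {f' t p : ℝ} (hf : HasDerivAt f f' t)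
    (ht : t ∈ Ioo 0 1) :
    HasDerivAt (fun y => (y * (1 - y)) ^ p * f y)
      ((t * (1 - t)) ^ (p - 1) * (p * (1 - 2 * t) * f t + t * (1 - t) * f')) t := by
  have hq : 0 < t * (1 - t) := mul_pos ht.1 (sub_pos.2 ht.2)
  have hpoly : HasDerivAt (fun y => y * (1 - y)) (1 - 2 * t) t :=
    ((hasDerivAt_id' t).mul ((hasDerivAt_id' t).const_sub 1)).congr_deriv (by ring)
  refine ((hpoly.rpow_const (Or.inl hq.ne')).mul hf).congr_deriv ?_
  have hp : (t * (1 - t)) ^ p = (t * (1 - t)) ^ (p - 1) * (t * (1 - t)) := by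
    rw [← Real.rpow_add_one hq.ne', sub_add_cancel]
  rw [hp]
  ring

section ClusterNumber

open Real

lemma abs_one_sub_lt_one {t : ℝ} (ht : t ∈ Ioo 0 1) : |1 - t| < 1 :=
  abs_lt.2 ⟨by linarith [ht.2], by linarith [ht.1]⟩

lemma Nh_eq_log_add_tsum : Nh = fun z => 1 / 2 - √3 / (4 * π) *
    (log (1 - z) + ∑' k : ℕ, pochRatio (4/3) (5/3) k / (k + 1) * (1 - z) ^ (k + 1)) := by
  funext z
  rw [Nh, F32R, ← tsum_mul_left]
  simp_rw [F32R_coeff_eq_pochRatio, pow_succ]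
  congr 3
  exact tsum_congr fun k => by ring

lemma hasDerivAt_Nh {t : ℝ} (ht : t ∈ Ioo 0 1) :
    HasDerivAt Nh (√3 / (4 * π) * (1 / (1 - t) + F21R 1 (4/3) (5/3) (1 - t))) t := by
  have h1t := abs_one_sub_lt_one ht
  have hsub := (hasDerivAt_id' t).const_sub 1
  have hlog := (Real.hasDerivAt_log (sub_pos.2 ht.2).ne').comp t hsub
  have hseries := (hasDerivAt_tsum_div_succ_mul_pow_succ
    (abs_pochRatio_le_succ (a := 4/3) (b := 5/3) (by norm_num) (by norm_num)) h1t).comp t hsub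
  rw [Nh_eq_log_add_tsum, F21R_one_left]
  refine (((hlog.add hseries).const_mul _).const_sub _).congr_deriv ?_
  field_simp
  ring

lemma hasDerivAt_deriv_Nh {t : ℝ} (ht : t ∈ Ioo 0 1) :
    HasDerivAt (deriv Nh)
      (√3 / (4 * π) * (1 / (1 - t) ^ 2 - deriv (F21R 1 (4/3) (5/3)) (1 - t))) t := by
  have h1t := abs_one_sub_lt_one ht
  have hsub := (hasDerivAt_id' t).const_sub 1
  have hinv := hsub.inv (sub_pos.2 ht.2).ne'
  have hF := (hasDerivAt_F21R_one_left (a := 4/3) (b := 5/3) (by norm_num) (by norm_num)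
    h1t).differentiableAt.hasDerivAt.comp t hsub
  refine (((hinv.add hF).const_mul (√3 / (4 * π))).congr_of_eventuallyEq ?_).congr_deriv (by ring)
  filter_upwards [isOpen_Ioo.mem_nhds ht] with y hy
  simp [(hasDerivAt_Nh hy).deriv]

lemma deriv_Nh_ode {t : ℝ} (ht : t ∈ Ioo 0 1) :
    2 / 3 * (1 - 2 * t) * deriv Nh t + t * (1 - t) * deriv (deriv Nh) t
      = √3 / (4 * π) * t / (3 * (1 - t)) := by
  have ode := F21R_one_left_ode (a := 4/3) (b := 5/3) (by norm_num) (by norm_num)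
    (abs_one_sub_lt_one ht)
  have h1 : 1 - t ≠ 0 := (sub_pos.2 ht.2).ne'
  rw [(hasDerivAt_deriv_Nh ht).deriv, (hasDerivAt_Nh ht).deriv]
  field_simp
  linear_combination (-3 * (1 - t)) * ode

lemma rpow_mul_deriv_rpow_mul_deriv_Nh {y : ℝ} (hy : y ∈ Ioo 0 1) :
    (y * (1 - y)) ^ ((4 : ℝ) / 3) * deriv (fun t => (t * (1 - t)) ^ ((2 : ℝ) / 3) * deriv Nh t) y
      = √3 / (4 * π) / 3 * y ^ 2 := by
  have hq : 0 < y * (1 - y) := mul_pos hy.1 (sub_pos.2 hy.2)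
  have h1 : 1 - y ≠ 0 := (sub_pos.2 hy.2).ne'
  rw [((hasDerivAt_deriv_Nh hy).differentiableAt.hasDerivAt.rpow_mul_one_sub_mul hy).deriv,
    deriv_Nh_ode hy, ← mul_assoc, ← Real.rpow_add hq]
  norm_num
  field_simp

end ClusterNumber

/-- `𝔑_h` satisfies Watts's fifth-order differential equation on `(0,1)`. -/
theorem stmt6 (x : ℝ) (hx : x ∈ Set.Ioo (0:ℝ) 1) :
    iteratedDeriv 3
      (fun y => (y * (1 - y)) ^ ((4:ℝ)/3) *
        deriv (fun t => (t * (1 - t)) ^ ((2:ℝ)/3) * deriv Nh t) y) x = 0 := by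
  have hquad : EqOn
      (fun y => (y * (1 - y)) ^ ((4:ℝ)/3) *
        deriv (fun t => (t * (1 - t)) ^ ((2:ℝ)/3) * deriv Nh t) y)
      (fun y => Real.sqrt 3 / (4 * Real.pi) / 3 * y ^ 2) (Ioo 0 1) :=
    fun y hy => rpow_mul_deriv_rpow_mul_deriv_Nh hy
  rw [hquad.iteratedDeriv_of_isOpen isOpen_Ioo 3 hx]
  simp
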